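/- For every first-order formula φ(x, y; p₁, …, pₘ) in the language of E (one binary relation symbol, interpreted as inclusion) there is a natural number k, depending only on φ, with the following property: for every finite family 𝐑 of pairwise disjoint infinite computable subsets of ℕ with |𝐑| ≥ k and for every tuple (A₁, …, Aₘ) of c.e. sets, the relation {(X, Y) : X, Y ∈ 𝐑 and E ⊨ φ(X, Y; A₁, …, Aₘ)} is not a strict linear order on 𝐑 (that is, it is not simultaneously irreflexive, transitive, and such that any two distinct members of 𝐑 are comparable). -/

import Mathlib

open FirstOrder

/-- A set of natural numbers is computably enumerable if it is the domain of a
partial computable function. -/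
def CE (A : Set ℕ) : Prop := ∃ f : ℕ →. ℕ, Partrec f ∧ A = f.Dom

/-- A set of natural numbers is computable if its membership predicate is computable. -/
def IsComputableSet (A : Set ℕ) : Prop := ComputablePred (· ∈ A)

/-- The universe of the structure `E`: all c.e. subsets of `ℕ`. -/
def CESets : Type := {A : Set ℕ // CE A}

/-- The relation symbols of the language of `E`: a single binary relation
(interpreted as inclusion). -/
inductive incRel : ℕ → Type
  | inc : incRel 2

/-- The language of `E`, with one binary relation symbol. -/
def Linc : Language := ⟨fun _ => Empty, incRel⟩

/-- The structure `E`: c.e. sets with the binary relation interpreted as set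
inclusion. -/
instance EStructure : Linc.Structure CESets where
  funMap := fun f _ => f.elim
  RelMap | .inc => fun x => (x 0).val ⊆ (x 1).val

/-!
If `ℕ` is split into three c.e. (hence computable) sets `X`, `Y`, `Z`, restriction to the pieces
is an isomorphism of `E` with `E|X × E|Y × E|Z`, where `E|S` is the lattice of c.e. subsets of `S`.
By the Feferman–Vaught decomposition of formulas over products, `φ(X, Y, A)` then holds iff for one
of finitely many triples `(ψ₁, ψ₂, ψ₃)`, depending only on `φ`, `ψ₁` holds of `(X, ∅, A ∩ X)` in
`E|X`, `ψ₂` of `(∅, Y, A ∩ Y)` in `E|Y` and `ψ₃` of `(∅, ∅, A ∩ Z)` in `E|Z`. If there are `N`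
triples, what this uses about `X` (and about `Y`) takes at most `4 ^ N` values, so among more than
`4 ^ N` pairwise disjoint computable sets two of them, `X` and `Y`, look alike, and then
`φ(X, Y, A) ↔ φ(Y, X, A)`, which no strict linear order allows.
-/

theorem REPred.and {α : Type*} [Primcodable α] {p q : α → Prop} (hp : REPred p)
    (hq : REPred q) : REPred fun a => p a ∧ q a :=
  (hp.bind (hq.comp Computable.fst).to₂).of_eq fun a => by
    ext u
    simp [Part.assert, Part.mem_bind_iff]

theorem REPred.or {α : Type*} [Primcodable α] {p q : α → Prop} (hp : REPred p)
    (hq : REPred q) : REPred fun a => p a ∨ q a := by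
  obtain ⟨k, hk, hdom⟩ := Partrec.merge' hp hq
  exact hk.dom_re.of_eq fun a => by simpa [Part.assert] using (hdom a).2

theorem ce_iff_rePred {A : Set ℕ} : CE A ↔ REPred (· ∈ A) := by
  refine ⟨fun ⟨f, hf, hA⟩ => hA ▸ hf.dom_re, fun hA => ?_⟩
  refine ⟨fun a => (Part.assert (a ∈ A) fun _ => Part.some ()).map fun _ => 0,
    hA.map ((Computable.const 0).comp Computable.fst).to₂, ?_⟩
  ext a
  simp [PFun.Dom, Part.assert]

theorem ce_empty : CE (∅ : Set ℕ) :=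
  ⟨fun _ => Part.none, Partrec.none, by ext; simp [PFun.Dom]⟩

theorem CE.inter {A B : Set ℕ} (hA : CE A) (hB : CE B) : CE (A ∩ B) :=
  ce_iff_rePred.2 <| (ce_iff_rePred.1 hA).and (ce_iff_rePred.1 hB)

theorem CE.union {A B : Set ℕ} (hA : CE A) (hB : CE B) : CE (A ∪ B) :=
  ce_iff_rePred.2 <| (ce_iff_rePred.1 hA).or (ce_iff_rePred.1 hB)

theorem IsComputableSet.ce {A : Set ℕ} (hA : IsComputableSet A) : CE A :=
  ce_iff_rePred.2 hA.to_re

theorem IsComputableSet.compl {A : Set ℕ} (hA : IsComputableSet A) : IsComputableSet Aᶜ :=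
  ComputablePred.not hA

namespace FirstOrder.Language

variable {L : Language} {M N P : Type*} [L.Structure M] [L.Structure N] [L.Structure P]

instance prodStructure : L.Structure (M × N) where
  funMap f x := (Structure.funMap f (Prod.fst ∘ x), Structure.funMap f (Prod.snd ∘ x))
  RelMap r x := Structure.RelMap r (Prod.fst ∘ x) ∧ Structure.RelMap r (Prod.snd ∘ x)

theorem relMap_prod {l : ℕ} (r : L.Relations l) (x : Fin l → M × N) :
    Structure.RelMap r x ↔
      Structure.RelMap r (Prod.fst ∘ x) ∧ Structure.RelMap r (Prod.snd ∘ x) :=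
  Iff.rfl

theorem Term.realize_prod_fst {β : Type*} (t : L.Term β) (v : β → M × N) :
    (t.realize v).1 = t.realize (Prod.fst ∘ v) := by
  induction t with
  | var => rfl
  | func f ts ih => exact congrArg (Structure.funMap f) (funext ih)

theorem Term.realize_prod_snd {β : Type*} (t : L.Term β) (v : β → M × N) :
    (t.realize v).2 = t.realize (Prod.snd ∘ v) := by
  induction t with
  | var => rfl
  | func f ts ih => exact congrArg (Structure.funMap f) (funext ih)

namespace BoundedFormula

variable {α : Type*} {n : ℕ}

/-- A list of pairs of formulas stands for the union of the rectangles `p.1 × p.2` in `M × N`. -/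
def RealizeRects (l : List (L.BoundedFormula α n × L.BoundedFormula α n))
    (v₁ : α → M) (xs₁ : Fin n → M) (v₂ : α → N) (xs₂ : Fin n → N) : Prop :=
  ∃ p ∈ l, p.1.Realize v₁ xs₁ ∧ p.2.Realize v₂ xs₂

/-- The complement of a union of rectangles, again as a union of rectangles:
`(A × B)ᶜ ∩ U = (Aᶜ × univ) ∩ U ∪ (univ × Bᶜ) ∩ U`. -/
def complRects : List (L.BoundedFormula α n × L.BoundedFormula α n) →
    List (L.BoundedFormula α n × L.BoundedFormula α n)
  | [] => [(⊤, ⊤)]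
  | p :: l => (complRects l).flatMap fun q => [(p.1.not ⊓ q.1, q.2), (q.1, p.2.not ⊓ q.2)]

variable {v₁ : α → M} {xs₁ : Fin n → M} {v₂ : α → N} {xs₂ : Fin n → N}

theorem realizeRects_append {l l' : List (L.BoundedFormula α n × L.BoundedFormula α n)} :
    RealizeRects (l ++ l') v₁ xs₁ v₂ xs₂ ↔
      RealizeRects l v₁ xs₁ v₂ xs₂ ∨ RealizeRects l' v₁ xs₁ v₂ xs₂ := by
  simp only [RealizeRects, List.mem_append, or_and_right, exists_or]

theorem realizeRects_singleton {p : L.BoundedFormula α n × L.BoundedFormula α n} :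
    RealizeRects [p] v₁ xs₁ v₂ xs₂ ↔ p.1.Realize v₁ xs₁ ∧ p.2.Realize v₂ xs₂ := by
  simp [RealizeRects]

theorem realizeRects_complRects (l : List (L.BoundedFormula α n × L.BoundedFormula α n)) :
    RealizeRects (complRects l) v₁ xs₁ v₂ xs₂ ↔ ¬RealizeRects l v₁ xs₁ v₂ xs₂ := by
  induction l with
  | nil => simp [RealizeRects, complRects]
  | cons p l ih =>
    have hcons : RealizeRects (p :: l) v₁ xs₁ v₂ xs₂ ↔
        (p.1.Realize v₁ xs₁ ∧ p.2.Realize v₂ xs₂) ∨ RealizeRects l v₁ xs₁ v₂ xs₂ := by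
      simp only [RealizeRects, List.mem_cons, or_and_right, exists_or, exists_eq_left]
    rw [hcons, not_or, ← ih]
    have hmem : ∀ q ∈ complRects l, ∀ r ∈ [(p.1.not ⊓ q.1, q.2), (q.1, p.2.not ⊓ q.2)],
        r ∈ complRects (p :: l) := fun q hq r hr => List.mem_flatMap.2 ⟨q, hq, hr⟩
    constructor
    · rintro ⟨r, hr, h₁, h₂⟩
      obtain ⟨q, hq, hr⟩ := List.mem_flatMap.1 hr
      simp only [List.mem_cons, List.not_mem_nil, or_false] at hr
      rcases hr with rfl | rfl <;> simp only [realize_inf, realize_not] at h₁ h₂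
      · exact ⟨fun hp => h₁.1 hp.1, q, hq, h₁.2, h₂⟩
      · exact ⟨fun hp => h₂.1 hp.2, q, hq, h₁, h₂.2⟩
    · rintro ⟨hp, q, hq, h₁, h₂⟩
      by_cases hp₁ : p.1.Realize v₁ xs₁
      · exact ⟨(q.1, p.2.not ⊓ q.2), hmem q hq _ (by simp), h₁,
          realize_inf.2 ⟨realize_not.2 fun hp₂ => hp ⟨hp₁, hp₂⟩, h₂⟩⟩
      · exact ⟨(p.1.not ⊓ q.1, q.2), hmem q hq _ (by simp),
          realize_inf.2 ⟨realize_not.2 hp₁, h₁⟩, h₂⟩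

/-- The Feferman–Vaught decomposition of `φ` over products: `φ` holds in `M × N` exactly on
the union of the rectangles in `rects φ`. -/
def rects : ∀ {n}, L.BoundedFormula α n → List (L.BoundedFormula α n × L.BoundedFormula α n)
  | _, falsum => []
  | _, equal t u => [(equal t u, equal t u)]
  | _, rel r ts => [(rel r ts, rel r ts)]
  | _, imp φ ψ => complRects (rects φ) ++ rects ψ
  | _, all φ => complRects ((complRects (rects φ)).map fun p => (p.1.ex, p.2.ex))

theorem realize_iff_realizeRects (φ : L.BoundedFormula α n) (v : α → M × N)
    (xs : Fin n → M × N) :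
    φ.Realize v xs ↔ RealizeRects (rects φ) (Prod.fst ∘ v) (Prod.fst ∘ xs) (Prod.snd ∘ v)
      (Prod.snd ∘ xs) := by
  induction φ with
  | falsum => simp [rects, RealizeRects, Realize]
  | equal t u =>
    rw [rects, realizeRects_singleton]
    simp only [Realize, Prod.ext_iff, Term.realize_prod_fst, Term.realize_prod_snd, Sum.comp_elim]
  | rel r ts =>
    rw [rects, realizeRects_singleton]
    simp only [Realize, relMap_prod, ← Sum.comp_elim]
    simp only [Function.comp_def, Term.realize_prod_fst, Term.realize_prod_snd]
  | imp φ ψ ihφ ihψ =>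
    rw [realize_imp, ihφ, ihψ, rects, realizeRects_append, realizeRects_complRects]
    tauto
  | all φ ih =>
    have hex : RealizeRects ((complRects (rects φ)).map fun p => (p.1.ex, p.2.ex))
        (Prod.fst ∘ v) (Prod.fst ∘ xs) (Prod.snd ∘ v) (Prod.snd ∘ xs) ↔
        ∃ x : M × N, RealizeRects (complRects (rects φ)) (Prod.fst ∘ v)
          (Fin.snoc (Prod.fst ∘ xs) x.1) (Prod.snd ∘ v) (Fin.snoc (Prod.snd ∘ xs) x.2) := by
      simp only [RealizeRects, List.mem_map, exists_exists_and_eq_and, realize_ex]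
      constructor
      · rintro ⟨q, hq, ⟨a, ha⟩, b, hb⟩
        exact ⟨(a, b), q, hq, ha, hb⟩
      · rintro ⟨x, q, hq, ha, hb⟩
        exact ⟨q, hq, ⟨x.1, ha⟩, x.2, hb⟩
    rw [realize_all, rects, realizeRects_complRects, hex, not_exists]
    refine forall_congr' fun x => ?_
    rw [realizeRects_complRects, not_not, ih, Fin.comp_snoc, Fin.comp_snoc]

end BoundedFormula

namespace Formula

variable {α : Type*}

theorem realize_iff_exists_rects (φ : L.Formula α) (v : α → M × N) :
    φ.Realize v ↔
      ∃ p ∈ φ.rects, Formula.Realize p.1 (Prod.fst ∘ v) ∧ Formula.Realize p.2 (Prod.snd ∘ v) := by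
  rw [Formula.Realize, BoundedFormula.realize_iff_realizeRects,
    Unique.eq_default (Prod.fst ∘ (default : Fin 0 → M × N)),
    Unique.eq_default (Prod.snd ∘ (default : Fin 0 → M × N))]
  rfl

def rects₃ (φ : L.Formula α) : List (L.Formula α × L.Formula α × L.Formula α) :=
  φ.rects.flatMap fun p => p.2.rects.map fun q => (p.1, q.1, q.2)

theorem realize_iff_exists_rects₃ (φ : L.Formula α) (v : α → M × N × P) :
    φ.Realize v ↔ ∃ t ∈ φ.rects₃, t.1.Realize (Prod.fst ∘ v) ∧
      t.2.1.Realize (Prod.fst ∘ Prod.snd ∘ v) ∧ t.2.2.Realize (Prod.snd ∘ Prod.snd ∘ v) := by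
  simp only [realize_iff_exists_rects φ v, realize_iff_exists_rects _ (Prod.snd ∘ v), rects₃,
    List.mem_flatMap, List.mem_map]
  constructor
  · rintro ⟨p, hp, h₁, q, hq, h₂, h₃⟩
    exact ⟨(p.1, q.1, q.2), ⟨p, hp, q, hq, rfl⟩, h₁, h₂, h₃⟩
  · rintro ⟨_, ⟨p, hp, q, hq, rfl⟩, h₁, h₂, h₃⟩
    exact ⟨p, hp, h₁, q, hq, h₂, h₃⟩

end Formula

end FirstOrder.Language

/-- The restriction of `E` to `S`: the c.e. subsets of `S`, ordered by inclusion. -/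
def CEIn (S : Set ℕ) : Type := {A : Set ℕ // CE A ∧ A ⊆ S}

instance (S : Set ℕ) : Linc.Structure (CEIn S) where
  funMap := fun f _ => f.elim
  RelMap | .inc => fun x => (x 0).val ⊆ (x 1).val

instance : EmptyCollection CESets := ⟨⟨∅, ce_empty⟩⟩

namespace CESets

def restrict (S B : CESets) : CEIn S.val :=
  ⟨B.val ∩ S.val, B.2.inter S.2, Set.inter_subset_right⟩

theorem restrict_eq_empty {S B : CESets} (h : Disjoint B.val S.val) :
    S.restrict B = S.restrict ∅ :=
  Subtype.ext <| h.inter_eq.trans (Set.empty_inter _).symm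

def decompose (X Y Z : CESets) (hXY : Disjoint X.val Y.val) (hXZ : Disjoint X.val Z.val)
    (hYZ : Disjoint Y.val Z.val) (hcover : X.val ∪ Y.val ∪ Z.val = Set.univ) :
    CESets ≃[Linc] CEIn X.val × CEIn Y.val × CEIn Z.val where
  toFun B := (X.restrict B, Y.restrict B, Z.restrict B)
  invFun B := ⟨B.1.val ∪ B.2.1.val ∪ B.2.2.val, (B.1.2.1.union B.2.1.2.1).union B.2.2.2.1⟩
  left_inv B := Subtype.ext <| by
    simp only [restrict]
    rw [← Set.inter_union_distrib_left, ← Set.inter_union_distrib_left, hcover, Set.inter_univ]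
  right_inv := by
    rintro ⟨⟨B, -, hB⟩, ⟨C, -, hC⟩, ⟨D, -, hD⟩⟩
    refine Prod.ext (Subtype.ext ?_) (Prod.ext (Subtype.ext ?_) (Subtype.ext ?_)) <;>
      ext a <;> simp only [restrict, Set.mem_inter_iff, Set.mem_union] <;>
      grind
  map_fun' f := f.elim
  map_rel' r x := by
    cases r
    show (_ ∩ X.val ⊆ _ ∩ X.val ∧ _ ∩ Y.val ⊆ _ ∩ Y.val ∧ _ ∩ Z.val ⊆ _ ∩ Z.val) ↔
      (x 0).val ⊆ (x 1).val
    refine ⟨fun ⟨hX, hY, hZ⟩ a ha => ?_, fun h => ⟨Set.inter_subset_inter_left _ h,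
      Set.inter_subset_inter_left _ h, Set.inter_subset_inter_left _ h⟩⟩
    obtain (haX | haY) | haZ : a ∈ X.val ∪ Y.val ∪ Z.val := hcover ▸ Set.mem_univ a
    exacts [(hX ⟨ha, haX⟩).1, (hY ⟨ha, haY⟩).1, (hZ ⟨ha, haZ⟩).1]

theorem realize_iff_exists_rects₃ {α : Type*} (φ : Linc.Formula α) {X Y Z : CESets}
    (hXY : Disjoint X.val Y.val) (hXZ : Disjoint X.val Z.val) (hYZ : Disjoint Y.val Z.val)
    (hcover : X.val ∪ Y.val ∪ Z.val = Set.univ) (v : α → CESets) :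
    φ.Realize v ↔ ∃ t ∈ φ.rects₃, t.1.Realize (X.restrict ∘ v) ∧
      t.2.1.Realize (Y.restrict ∘ v) ∧ t.2.2.Realize (Z.restrict ∘ v) :=
  (Language.StrongHomClass.realize_formula (decompose X Y Z hXY hXZ hYZ hcover) φ).symm.trans
    (φ.realize_iff_exists_rects₃ _)

end CESets

section Profile

variable {m : ℕ} (φ : Linc.Formula (Fin (m + 2))) (A : Fin m → CESets)

/-- All that `CESets.realize_iff_exists_rects₃` needs to know about `W` when `W` is the first or
the second piece of the partition. -/
def profile (W : CESets) : Fin φ.rects₃.length → Prop × Prop := fun i =>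
  ((φ.rects₃.get i).1.Realize (Fin.cons (W.restrict W) (Fin.cons (W.restrict ∅) (W.restrict ∘ A))),
    (φ.rects₃.get i).2.1.Realize
      (Fin.cons (W.restrict ∅) (Fin.cons (W.restrict W) (W.restrict ∘ A))))

variable {φ A}

theorem realize_iff_of_profile_eq {X Y : CESets} (h : profile φ A X = profile φ A Y)
    {t : Linc.Formula (Fin (m + 2)) × Linc.Formula (Fin (m + 2)) × Linc.Formula (Fin (m + 2))}
    (ht : t ∈ φ.rects₃) :
    (t.1.Realize (Fin.cons (X.restrict X) (Fin.cons (X.restrict ∅) (X.restrict ∘ A))) ↔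
      t.1.Realize (Fin.cons (Y.restrict Y) (Fin.cons (Y.restrict ∅) (Y.restrict ∘ A)))) ∧
    (t.2.1.Realize (Fin.cons (X.restrict ∅) (Fin.cons (X.restrict X) (X.restrict ∘ A))) ↔
      t.2.1.Realize (Fin.cons (Y.restrict ∅) (Fin.cons (Y.restrict Y) (Y.restrict ∘ A)))) := by
  obtain ⟨i, rfl⟩ := List.mem_iff_get.1 ht
  exact ⟨Iff.of_eq (congrArg Prod.fst (congrFun h i)), Iff.of_eq (congrArg Prod.snd (congrFun h i))⟩

theorem realize_swap_of_profile_eq {X Y : CESets} (hX : IsComputableSet X.val)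
    (hY : IsComputableSet Y.val) (hXY : Disjoint X.val Y.val) (h : profile φ A X = profile φ A Y) :
    φ.Realize (Fin.cons X (Fin.cons Y A)) ↔ φ.Realize (Fin.cons Y (Fin.cons X A)) := by
  let Z : CESets := ⟨X.valᶜ ∩ Y.valᶜ, hX.compl.ce.inter hY.compl.ce⟩
  have hXZ : Disjoint X.val Z.val := disjoint_compl_right.mono_right Set.inter_subset_left
  have hYZ : Disjoint Y.val Z.val := disjoint_compl_right.mono_right Set.inter_subset_right
  have hcover : X.val ∪ Y.val ∪ Z.val = Set.univ := by
    ext a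
    simp only [Z, Set.mem_union, Set.mem_inter_iff, Set.mem_compl_iff, Set.mem_univ, iff_true]
    tauto
  rw [CESets.realize_iff_exists_rects₃ φ hXY hXZ hYZ hcover,
    CESets.realize_iff_exists_rects₃ φ hXY.symm hYZ hXZ (by rwa [Set.union_comm Y.val])]
  simp only [Fin.comp_cons, CESets.restrict_eq_empty hXY, CESets.restrict_eq_empty hXY.symm,
    CESets.restrict_eq_empty hXZ, CESets.restrict_eq_empty hYZ]
  refine exists_congr fun t => and_congr_right fun ht => ?_
  rw [(realize_iff_of_profile_eq h ht).1, (realize_iff_of_profile_eq h ht).2]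

end Profile

/-- For every first-order formula `φ(x, y; p₁, …, pₘ)` in the
language of `E` there is a number `k`, depending only on `φ`, such that for every
finite family `𝐑` of pairwise disjoint infinite computable sets with `|𝐑| ≥ k`
and all c.e. parameters, the relation defined by `φ` on `𝐑` is not a strict
linear order. -/
theorem stmt18 (m : ℕ) (φ : Linc.Formula (Fin (m + 2))) :
    ∃ k : ℕ, ∀ R : Finset CESets,
      (∀ X ∈ R, IsComputableSet X.val ∧ X.val.Infinite) →
      (∀ X ∈ R, ∀ Y ∈ R, X ≠ Y → X.val ∩ Y.val = ∅) →
      k ≤ R.card →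
      ∀ A : Fin m → CESets,
        ¬ ((∀ X ∈ R, ¬ φ.Realize (Fin.cons X (Fin.cons X A))) ∧
          (∀ X ∈ R, ∀ Y ∈ R, ∀ Z ∈ R,
            φ.Realize (Fin.cons X (Fin.cons Y A)) →
            φ.Realize (Fin.cons Y (Fin.cons Z A)) →
            φ.Realize (Fin.cons X (Fin.cons Z A))) ∧
          (∀ X ∈ R, ∀ Y ∈ R, X ≠ Y →
            φ.Realize (Fin.cons X (Fin.cons Y A)) ∨
            φ.Realize (Fin.cons Y (Fin.cons X A)))) := by
  refine ⟨4 ^ φ.rects₃.length + 1, fun R hR hdisj hk A ⟨hirrefl, htrans, htotal⟩ => ?_⟩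
  obtain ⟨X, hX, Y, hY, hne, hprofile⟩ :
      ∃ X ∈ R, ∃ Y ∈ R, X ≠ Y ∧ profile φ A X = profile φ A Y := by
    refine Finset.exists_ne_map_eq_of_card_lt_of_maps_to (t := Finset.univ) ?_
      fun _ _ => Finset.mem_univ _
    simp only [Finset.card_univ, Fintype.card_fun, Fintype.card_prod, Fintype.card_prop,
      Fintype.card_fin, Nat.reduceMul]
    omega
  have hswap := realize_swap_of_profile_eq (hR X hX).1 (hR Y hY).1
    (Set.disjoint_iff_inter_eq_empty.2 (hdisj X hX Y hY hne)) hprofile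
  have hXY : φ.Realize (Fin.cons X (Fin.cons Y A)) := (htotal X hX Y hY hne).elim id hswap.2
  exact hirrefl X hX (htrans X hX Y hY X hX hXY (hswap.1 hXY))
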